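/- For z, w ∈ ℂ with z ≠ 0 and w ≠ 0, the vectors exp(z ρ_n(Y)) v_0 and exp(w ρ_n(X)) v_n span the same complex line in ℂ^{n+1} if and only if w = 1/z. -/

import Mathlib

/-!
Writing `u(z) = exp(z ρ_n(Y)) v₀`, one computes `u(z) = ∑ᵢ zⁱ/i! vᵢ` and
`exp(w ρ_n(X)) v_n = ∑ᵢ w^(n-i) n!/i! vᵢ = n! wⁿ u(w⁻¹)`. So the two lines agree iff
`u(z)` and `u(w⁻¹)` are proportional, and since the first two coordinates of `u(z)` are `1` and
`z`, this happens iff `z = w⁻¹`.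
-/

open Matrix
open scoped Nat

theorem Fin.sum_ite_val_eq {M : Type*} [AddCommMonoid M] {n : ℕ} (f : ℕ → M) (m : ℕ) :
    ∑ j : Fin (n + 1), (if (j : ℕ) = m then f j else 0) = if m < n + 1 then f m else 0 := by
  split_ifs with h
  · have hj (j : Fin (n + 1)) : (j : ℕ) = m ↔ j = ⟨m, h⟩ := by simp [Fin.ext_iff]
    simp_rw [hj, Finset.sum_ite_eq', Finset.mem_univ, if_true]
  · exact Finset.sum_eq_zero fun j _ => if_neg (by omega)

theorem Matrix.pow_apply_eq_zero_of_lt_add {R : Type*} [Semiring R] {m : ℕ}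
    {M : Matrix (Fin m) (Fin m) R} (hM : ∀ i j, i ≤ j → M i j = 0) (k : ℕ) :
    ∀ i j : Fin m, (i : ℕ) < j + k → (M ^ k) i j = 0 := by
  induction k with
  | zero => exact fun i j h => one_apply_ne (by omega)
  | succ k ih =>
    intro i j h
    rw [pow_succ, mul_apply]
    refine Finset.sum_eq_zero fun l _ => ?_
    rcases le_or_gt l j with hlj | hjl
    · rw [hM l j hlj, mul_zero]
    · rw [ih i l (by omega), zero_mul]

theorem Matrix.pow_eq_zero_of_apply_eq_zero_of_le {R : Type*} [Semiring R] {m : ℕ}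
    {M : Matrix (Fin m) (Fin m) R} (hM : ∀ i j, i ≤ j → M i j = 0) : M ^ m = 0 := by
  ext i j
  exact pow_apply_eq_zero_of_lt_add hM m i j (by omega)

theorem NormedSpace.exp_eq_sum_range_of_pow_eq_zero {𝕂 𝔸 : Type*} [Field 𝕂] [CharZero 𝕂]
    [Ring 𝔸] [Algebra 𝕂 𝔸] [TopologicalSpace 𝔸] [IsTopologicalRing 𝔸] {a : 𝔸} {N : ℕ}
    (ha : a ^ N = 0) : exp a = ∑ k ∈ Finset.range N, ((k ! : 𝕂)⁻¹) • a ^ k := by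
  rw [exp_eq_tsum 𝕂]
  refine tsum_eq_sum fun k hk => ?_
  rw [pow_eq_zero_of_le (by simpa using hk) ha, smul_zero]

theorem Matrix.exp_smul_mulVec_eq_sum {m : Type*} [Fintype m] [DecidableEq m]
    {A : Matrix m m ℂ} {N : ℕ} (hA : A ^ N = 0) (c : ℂ) (v : m → ℂ) :
    NormedSpace.exp (c • A) *ᵥ v = ∑ k ∈ Finset.range N, (c ^ k / k !) • (A ^ k *ᵥ v) := by
  have hcA : (c • A) ^ N = 0 := by rw [smul_pow, hA, smul_zero]
  rw [NormedSpace.exp_eq_sum_range_of_pow_eq_zero (𝕂 := ℂ) hcA, sum_mulVec]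
  refine Finset.sum_congr rfl fun k _ => ?_
  rw [smul_pow, smul_smul, smul_mulVec, inv_mul_eq_div]

-- The matrices of `ρ_n(Y)` and `ρ_n(X)` in the basis `v₀, …, v_n`.
def sl2Lowering (n : ℕ) : Matrix (Fin (n + 1)) (Fin (n + 1)) ℂ :=
  Matrix.of fun i j => if (i : ℕ) = (j : ℕ) + 1 then 1 else 0

def sl2Raising (n : ℕ) : Matrix (Fin (n + 1)) (Fin (n + 1)) ℂ :=
  Matrix.of fun i j => if (j : ℕ) = (i : ℕ) + 1 then
    ((j : ℕ) : ℂ) * ((n : ℂ) - ((j : ℕ) : ℂ) + 1) else 0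

section Sl2

variable {n : ℕ}

theorem sl2Lowering_pow_succ : sl2Lowering n ^ (n + 1) = 0 :=
  pow_eq_zero_of_apply_eq_zero_of_le fun _ _ _ => if_neg (by omega)

theorem sl2Raising_pow_succ : sl2Raising n ^ (n + 1) = 0 := by
  rw [← transpose_eq_zero, transpose_pow]
  exact pow_eq_zero_of_apply_eq_zero_of_le fun _ _ _ => if_neg (by omega)

theorem sl2Lowering_pow_mulVec_single_zero (k : ℕ) :
    sl2Lowering n ^ k *ᵥ Pi.single 0 1 = fun i : Fin (n + 1) => if (i : ℕ) = k then 1 else 0 := by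
  induction k with
  | zero =>
    ext i
    simp only [pow_zero, one_mulVec, Pi.single_apply, Fin.ext_iff, Fin.val_zero]
  | succ k ih =>
    ext i
    rw [pow_succ', ← mulVec_mulVec, ih]
    simp only [mulVec, dotProduct, sl2Lowering, of_apply, mul_ite, mul_one, mul_zero]
    rw [Fin.sum_ite_val_eq (fun j => if (i : ℕ) = j + 1 then (1 : ℂ) else 0)]
    split_ifs <;> first | rfl | omega

theorem sl2Raising_pow_mulVec_single_last (k : ℕ) :
    sl2Raising n ^ k *ᵥ Pi.single (Fin.last n) 1 =
      fun i : Fin (n + 1) => if (i : ℕ) + k = n then (n ! * k ! / (i : ℕ)! : ℂ) else 0 := by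
  induction k with
  | zero =>
    ext i
    simp only [pow_zero, one_mulVec, Pi.single_apply, Fin.ext_iff, Fin.val_last, add_zero]
    split_ifs with h
    · simp [h, Nat.factorial_ne_zero]
    · rfl
  | succ k ih =>
    ext i
    rw [pow_succ', ← mulVec_mulVec, ih]
    simp only [mulVec, dotProduct, sl2Raising, of_apply, ite_mul, zero_mul]
    rw [Fin.sum_ite_val_eq (fun j : ℕ => (j : ℂ) * (n - j + 1) *
      if j + k = n then (n ! * k ! / j ! : ℂ) else 0)]
    by_cases h : (i : ℕ) + (k + 1) = n
    · rw [if_pos (by omega), if_pos (by omega), if_pos h]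
      have hn : (n : ℂ) = i + (k + 1) := by exact_mod_cast h.symm
      rw [Nat.factorial_succ, Nat.factorial_succ, hn]
      push_cast
      field_simp
      ring
    · have h' : ¬(i : ℕ) + 1 + k = n := by omega
      simp [h, h']

theorem exp_smul_sl2Lowering_mulVec_single_zero (z : ℂ) :
    NormedSpace.exp (z • sl2Lowering n) *ᵥ Pi.single 0 1 =
      fun i : Fin (n + 1) => z ^ (i : ℕ) / (i : ℕ)! := by
  ext i
  simp only [exp_smul_mulVec_eq_sum sl2Lowering_pow_succ, sl2Lowering_pow_mulVec_single_zero,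
    Finset.sum_apply, Pi.smul_apply, smul_eq_mul, mul_ite, mul_one, mul_zero]
  rw [Finset.sum_ite_eq, if_pos (Finset.mem_range.mpr i.isLt)]

theorem exp_smul_sl2Raising_mulVec_single_last (w : ℂ) :
    NormedSpace.exp (w • sl2Raising n) *ᵥ Pi.single (Fin.last n) 1 =
      fun i : Fin (n + 1) => w ^ (n - i) * n ! / (i : ℕ)! := by
  ext i
  simp only [exp_smul_mulVec_eq_sum sl2Raising_pow_succ, sl2Raising_pow_mulVec_single_last,
    Finset.sum_apply, Pi.smul_apply, smul_eq_mul, mul_ite, mul_zero]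
  rw [Finset.sum_eq_single_of_mem (n - i) (by simp) fun k _ hk => if_neg (by omega),
    if_pos (by omega)]
  have : ((n - i)! : ℂ) ≠ 0 := Nat.cast_ne_zero.mpr (Nat.factorial_ne_zero _)
  field_simp

theorem exp_smul_sl2Raising_mulVec_single_last_eq {w : ℂ} (hw : w ≠ 0) :
    NormedSpace.exp (w • sl2Raising n) *ᵥ Pi.single (Fin.last n) 1 =
      (n ! * w ^ n : ℂ) • (NormedSpace.exp (w⁻¹ • sl2Lowering n) *ᵥ Pi.single 0 1) := by
  ext i
  rw [exp_smul_sl2Raising_mulVec_single_last, exp_smul_sl2Lowering_mulVec_single_zero]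
  simp only [Pi.smul_apply, smul_eq_mul, inv_pow]
  rw [pow_sub₀ w hw (by omega)]
  ring

theorem span_exp_smul_sl2Lowering_mulVec_single_zero_eq_iff (hn : 1 ≤ n) {z z' : ℂ} :
    Submodule.span ℂ {NormedSpace.exp (z • sl2Lowering n) *ᵥ Pi.single 0 1} =
        Submodule.span ℂ {NormedSpace.exp (z' • sl2Lowering n) *ᵥ Pi.single 0 1} ↔ z = z' := by
  refine ⟨fun h => ?_, fun h => h ▸ rfl⟩
  obtain ⟨c, hc⟩ := Submodule.span_singleton_eq_span_singleton.mp h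
  rw [exp_smul_sl2Lowering_mulVec_single_zero, exp_smul_sl2Lowering_mulVec_single_zero] at hc
  have h0 : (c : ℂ) = 1 := by simpa [Units.smul_def] using congrFun hc 0
  have h1 : (c : ℂ) * z = z' := by simpa [Units.smul_def] using congrFun hc ⟨1, by omega⟩
  rw [← h1, h0, one_mul]

end Sl2

theorem stmt4_general (n : ℕ) (hn : 1 ≤ n) (z w : ℂ) (hw : w ≠ 0)
    (X Y : Matrix (Fin (n + 1)) (Fin (n + 1)) ℂ)
    (hX : ∀ i j, X i j = if (j : ℕ) = (i : ℕ) + 1 then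
      ((j : ℕ) : ℂ) * ((n : ℂ) - ((j : ℕ) : ℂ) + 1) else 0)
    (hY : ∀ i j, Y i j = if (i : ℕ) = (j : ℕ) + 1 then 1 else 0) :
    Submodule.span ℂ {(NormedSpace.exp (z • Y)).mulVec (Pi.single 0 1)} =
      Submodule.span ℂ {(NormedSpace.exp (w • X)).mulVec (Pi.single (Fin.last n) 1)}
    ↔ w = 1 / z := by
  obtain rfl : X = sl2Raising n := Matrix.ext hX
  obtain rfl : Y = sl2Lowering n := Matrix.ext hY
  have hc : IsUnit (n ! * w ^ n : ℂ) := by simp [hw, Nat.factorial_ne_zero]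
  rw [exp_smul_sl2Raising_mulVec_single_last_eq hw, Submodule.span_singleton_smul_eq hc,
    span_exp_smul_sl2Lowering_mulVec_single_zero_eq_iff hn, one_div, eq_comm, inv_eq_iff_eq_inv]

/-- For `z, w ≠ 0`, the vectors `exp(z Y) v₀` and `exp(w X) v_n` of the irreducible
representation of `sl(2,ℂ)` on `ℂ^{n+1}` (`n ≥ 1`) span the same complex line
if and only if `w = 1/z`. -/
theorem stmt4 (n : ℕ) (hn : 1 ≤ n) (z w : ℂ) (hz : z ≠ 0) (hw : w ≠ 0)
    (X Y : Matrix (Fin (n + 1)) (Fin (n + 1)) ℂ)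
    (hX : ∀ i j, X i j = if (j : ℕ) = (i : ℕ) + 1 then
      ((j : ℕ) : ℂ) * ((n : ℂ) - ((j : ℕ) : ℂ) + 1) else 0)
    (hY : ∀ i j, Y i j = if (i : ℕ) = (j : ℕ) + 1 then 1 else 0) :
    Submodule.span ℂ {(NormedSpace.exp (z • Y)).mulVec (Pi.single 0 1)} =
      Submodule.span ℂ {(NormedSpace.exp (w • X)).mulVec (Pi.single (Fin.last n) 1)}
    ↔ w = 1 / z :=
  stmt4_general n hn z w hw X Y hX hY
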